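/- arXiv:1107.1387 — 4 statements merged into one kernel-verified Lean document; each statement's English description precedes it below -/
import Mathlib

section
/- Let d be an integer which is not a nonpositive even integer (i.e. d ∉ {0, −2, −4, …}). Then for every natural number k, every real δ, and all s, s' ∈ {0, 1, …, ⌊k/2⌋} with s ≠ s', one has α_{k,s,δ} ≠ α_{k,s',δ}. (Hence the minimal polynomial of the Casimir operator on degree-k symbols has simple roots and the operator is diagonalizable whenever the superdimension does not belong to −2ℕ.) -/
/-- `b_{k,s} = 2s(d + 2(k - s - 1))`. -/
noncomputable def bCoef (d : ℝ) (k s : ℕ) : ℝ :=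
  2 * (s : ℝ) * (d + 2 * ((k : ℝ) - (s : ℝ) - 1))

/-- `α_{k,s,δ} = -((-k + dδ)² - d(-2k + dδ) + k² - 2k) + b_{k,s}`. -/
noncomputable def alphaCoef (d δ : ℝ) (k s : ℕ) : ℝ :=
  -(((-(k : ℝ) + d * δ) ^ 2 - d * (-(2 * (k : ℝ)) + d * δ) + (k : ℝ) ^ 2 - 2 * (k : ℝ)))
    + bCoef d k s

/-! The difference `α_{k,s,δ} - α_{k,s',δ}` factors as `2 (s - s') (d - 2 (s + s' + 1 - k))`.
For distinct `s, s' ≤ ⌊k/2⌋` we have `s + s' + 1 ≤ k`, so a coincidence of two roots forces `d`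
to be a nonpositive even integer. -/

theorem alphaCoef_sub_alphaCoef (d δ : ℝ) (k s s' : ℕ) :
    alphaCoef d δ k s - alphaCoef d δ k s' =
      2 * ((s : ℝ) - s') * (d - 2 * ((s : ℝ) + s' + 1 - k)) := by
  unfold alphaCoef bCoef
  ring

theorem alphaCoef_eq_alphaCoef_iff (d δ : ℝ) (k s s' : ℕ) :
    alphaCoef d δ k s = alphaCoef d δ k s' ↔ s = s' ∨ d = 2 * ((s : ℝ) + s' + 1 - k) := by
  rw [← sub_eq_zero, alphaCoef_sub_alphaCoef, mul_eq_zero, mul_eq_zero, sub_eq_zero, sub_eq_zero,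
    Nat.cast_inj]
  simp only [two_ne_zero, false_or]

theorem add_add_one_le_of_le_div_two {k s s' : ℕ} (hs : s ≤ k / 2) (hs' : s' ≤ k / 2)
    (hss : s ≠ s') : s + s' + 1 ≤ k := by
  omega

/-- If the superdimension `d` is not a nonpositive even integer, then the roots
`α_{k,s,δ}` for `0 ≤ s ≤ ⌊k/2⌋` are pairwise distinct. -/
theorem alpha_ne_of_not_even_nonpos (d : ℤ) (hd : ¬ (Even d ∧ d ≤ 0)) :
    ∀ (k : ℕ) (δ : ℝ) (s s' : ℕ), s ≤ k / 2 → s' ≤ k / 2 → s ≠ s' →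
      alphaCoef (d : ℝ) δ k s ≠ alphaCoef (d : ℝ) δ k s' := by
  intro k δ s s' hs hs' hss
  rw [Ne, alphaCoef_eq_alphaCoef_iff, not_or]
  refine ⟨hss, fun hdR => hd ?_⟩
  have hdZ : d = 2 * ((s : ℤ) + s' + 1 - k) := by exact_mod_cast hdR
  have hsum := add_add_one_le_of_le_div_two hs hs' hss
  exact ⟨hdZ ▸ even_two_mul _, by omega⟩
end

section
/- For i, j ∈ {1, …, n}, let O_i^j be the n×n real matrix with entries (O_i^j)_{ab} = δ_{ai}δ_{bj} − ε_i ε_j δ_{aj}δ_{bi} (these matrices lie in so(p,q) and span it), and for an n×n matrix A let ρ(A) be the derivation of ℝ[X₁,…,Xₙ] given by ρ(A)(P) = ∑_{i,j=1}^n A_{ij} X_i ∂P/∂X_j. Then on the space of homogeneous polynomials of degree k one has the operator identity −(1/2) ∑_{i,j=1}^n ρ(O_j^i) ∘ ρ(O_i^j) = (2k − nk − k²)·Id + R∘Δ. (This is the key computation, in the purely even case r = 0, identifying the Casimir operator of the orthosymplectic algebra on degree-k symmetric tensors with a scalar plus R∘T.) -/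
open MvPolynomial

/-- Signature: `ε_i = 1` for `i < p` (1-based: `i ≤ p`), `ε_i = -1` otherwise. -/
noncomputable def sgn (p : ℕ) {n : ℕ} (i : Fin n) : ℝ := if (i : ℕ) < p then 1 else -1

/-- `F = ∑ ε_i X_i²`. -/
noncomputable def Fquad (p q : ℕ) : MvPolynomial (Fin (p + q)) ℝ :=
  ∑ i, C (sgn p i) * X i ^ 2

/-- The Laplacian of signature `(p,q)`: `Δ = ∑ ε_i ∂²/∂X_i²`. -/
noncomputable def lap (p q : ℕ) (P : MvPolynomial (Fin (p + q)) ℝ) :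
    MvPolynomial (Fin (p + q)) ℝ :=
  ∑ i, C (sgn p i) * pderiv i (pderiv i P)

/-- The generator `O_i^j ∈ so(p,q)`, with entries
`(O_i^j)_{ab} = δ_{ai}δ_{bj} - ε_i ε_j δ_{aj}δ_{bi}`. -/
noncomputable def Ogen (p : ℕ) {n : ℕ} (i j : Fin n) : Matrix (Fin n) (Fin n) ℝ :=
  Matrix.of fun a b =>
    (if a = i ∧ b = j then 1 else 0) - sgn p i * sgn p j * (if a = j ∧ b = i then 1 else 0)

/-- The derivation `ρ(A)(P) = ∑ A_{ij} X_i ∂P/∂X_j` of the polynomial ring induced by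
a matrix `A`. -/
noncomputable def rhoDer (p q : ℕ) (A : Matrix (Fin (p + q)) (Fin (p + q)) ℝ)
    (P : MvPolynomial (Fin (p + q)) ℝ) : MvPolynomial (Fin (p + q)) ℝ :=
  ∑ i, ∑ j, C (A i j) * X i * pderiv j P

/-!
Since `ρ(O_i^j) = X_i ∂_j - ε_i ε_j X_j ∂_i` and `ε_i² = 1`, swapping `i` and `j` in half of the
terms turns the Casimir sum into `2 ∑ X_j ∂_i X_i ∂_j - 2 ∑ ε_i ε_j X_i ∂_j X_i ∂_j`.
Commuting `∂` past `X` and applying Euler's identity (to `P`, of degree `k`, and to each `∂_j P`,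
of degree `k - 1`) evaluates the first sum to `(nk + k(k - 1)) P` and the second to `k P + R Δ P`.
-/

namespace MvPolynomial

variable {R σ : Type*} [CommSemiring R]

lemma pderiv_X_mul_self (i : σ) (Q : MvPolynomial σ R) :
    pderiv i (X i * Q) = Q + X i * pderiv i Q := by
  rw [pderiv_mul, pderiv_X_self, one_mul]

variable [Fintype σ] {P : MvPolynomial σ R} {k : ℕ}

theorem IsHomogeneous.sum_sum_X_mul_pderiv_X_mul_pderiv (hP : P.IsHomogeneous k) :
    ∑ i, ∑ j, X j * pderiv i (X i * pderiv j P) = (Fintype.card σ * k + k * (k - 1)) • P := by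
  have inner (j : σ) : ∑ i, X j * (X i * pderiv i (pderiv j P)) = (k - 1) • (X j * pderiv j P) := by
    rw [← Finset.mul_sum, (hP.pderiv (i := j)).sum_X_mul_pderiv, mul_smul_comm]
  simp_rw [pderiv_X_mul_self, mul_add, Finset.sum_add_distrib]
  rw [Finset.sum_comm (f := fun i j => X j * (X i * _)), Finset.sum_const, Finset.card_univ]
  simp_rw [inner, ← Finset.smul_sum, hP.sum_X_mul_pderiv, smul_smul, add_smul, mul_comm]

theorem IsHomogeneous.sum_sum_C_mul_X_mul_pderiv_X_mul_pderiv {ε : σ → R}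
    (hε : ∀ i, ε i * ε i = 1) (hP : P.IsHomogeneous k) :
    ∑ i, ∑ j, C (ε i * ε j) * (X i * pderiv j (X i * pderiv j P)) =
      k • P + (∑ i, C (ε i) * X i ^ 2) * ∑ j, C (ε j) * pderiv j (pderiv j P) := by
  have expand (i j : σ) : C (ε i * ε j) * (X i * pderiv j (X i * pderiv j P)) =
      C (ε i * ε j) * pderiv j (X i) * (X i * pderiv j P) +
        C (ε i) * X i ^ 2 * (C (ε j) * pderiv j (pderiv j P)) := by
    rw [pderiv_mul, map_mul]; ring
  have diagonal (i : σ) :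
      ∑ j, C (ε i * ε j) * pderiv j (X i) * (X i * pderiv j P) = X i * pderiv i P := by
    rw [Finset.sum_eq_single_of_mem i (Finset.mem_univ i) fun j _ hji => by
      rw [pderiv_X_of_ne hji.symm, mul_zero, zero_mul], hε, map_one, pderiv_X_self, one_mul,
      one_mul]
  simp_rw [expand, Finset.sum_add_distrib, diagonal, hP.sum_X_mul_pderiv, Finset.sum_mul_sum]

end MvPolynomial

lemma sgn_mul_self (p : ℕ) {n : ℕ} (i : Fin n) : sgn p i * sgn p i = 1 := by
  unfold sgn; split <;> norm_num

lemma rhoDer_Ogen (p q : ℕ) (i j : Fin (p + q)) (P : MvPolynomial (Fin (p + q)) ℝ) :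
    rhoDer p q (Ogen p i j) P = X i * pderiv j P - C (sgn p i * sgn p j) * (X j * pderiv i P) := by
  unfold rhoDer Ogen
  simp only [Matrix.of_apply, map_sub, map_mul, sub_mul, apply_ite C, map_one, map_zero,
    ite_mul, one_mul, zero_mul, ite_and, Finset.sum_sub_distrib]
  simp [Finset.sum_ite_eq', mul_assoc]

lemma rhoDer_Ogen_comp_rhoDer_Ogen (p q : ℕ) (i j : Fin (p + q))
    (P : MvPolynomial (Fin (p + q)) ℝ) :
    rhoDer p q (Ogen p j i) (rhoDer p q (Ogen p i j) P) =
      X j * pderiv i (X i * pderiv j P) + X i * pderiv j (X j * pderiv i P)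
        - C (sgn p j * sgn p i) * (X j * pderiv i (X j * pderiv i P))
        - C (sgn p i * sgn p j) * (X i * pderiv j (X i * pderiv j P)) := by
  have sq : C (sgn p i * sgn p j) * C (sgn p i * sgn p j) =
      (1 : MvPolynomial (Fin (p + q)) ℝ) := by
    rw [← map_mul, mul_mul_mul_comm, sgn_mul_self, sgn_mul_self, one_mul, map_one]
  simp only [rhoDer_Ogen, map_sub, pderiv_C_mul, mul_comm (sgn p j) (sgn p i)]
  linear_combination (X i * pderiv j (X j * pderiv i P)) * sq

theorem casimir_eq_scalar_add_RT_general (p q : ℕ) (k : ℕ)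
    (P : MvPolynomial (Fin (p + q)) ℝ) (hP : P.IsHomogeneous k) :
    (-(1 / 2) : ℝ) • ∑ i : Fin (p + q), ∑ j : Fin (p + q),
        rhoDer p q (Ogen p j i) (rhoDer p q (Ogen p i j) P) =
      (2 * (k : ℝ) - ((p + q : ℕ) : ℝ) * (k : ℝ) - (k : ℝ) ^ 2) • P +
        Fquad p q * lap p q P := by
  simp_rw [rhoDer_Ogen_comp_rhoDer_Ogen, Finset.sum_sub_distrib, Finset.sum_add_distrib]
  rw [Finset.sum_comm (f := fun i j => X i * pderiv j (X j * pderiv i P)),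
    Finset.sum_comm (f := fun i j => C (sgn p j * sgn p i) * (X j * pderiv i (X j * pderiv i P))),
    hP.sum_sum_X_mul_pderiv_X_mul_pderiv,
    hP.sum_sum_C_mul_X_mul_pderiv_X_mul_pderiv (sgn_mul_self p), ← Fquad, ← lap]
  have hk : ((k * (k - 1) : ℕ) : ℝ) = k ^ 2 - k := by
    cases k with
    | zero => simp
    | succ m => push_cast [Nat.add_sub_cancel]; ring
  simp only [Fintype.card_fin, ← Nat.cast_smul_eq_nsmul ℝ, Nat.cast_add, Nat.cast_mul (p + q), hk]
  module

/-- On homogeneous polynomials of degree `k`,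
`-(1/2) ∑_{i,j} ρ(O_j^i) ∘ ρ(O_i^j) = (2k - nk - k²)·Id + R∘Δ`: the Casimir operator
on degree-`k` symmetric tensors is a scalar plus `R∘T`. -/
theorem casimir_eq_scalar_add_RT (p q : ℕ) (hn : 1 ≤ p + q) (k : ℕ)
    (P : MvPolynomial (Fin (p + q)) ℝ) (hP : P.IsHomogeneous k) :
    (-(1 / 2) : ℝ) • ∑ i : Fin (p + q), ∑ j : Fin (p + q),
        rhoDer p q (Ogen p j i) (rhoDer p q (Ogen p i j) P) =
      (2 * (k : ℝ) - ((p + q : ℕ) : ℝ) * (k : ℝ) - (k : ℝ) ^ 2) • P +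
        Fquad p q * lap p q P :=
  casimir_eq_scalar_add_RT_general p q k P hP
end

section
/- Let K be a field, let V be a K-vector space with an internal direct sum decomposition V = V_0 ⊕ V_1 ⊕ ⋯ ⊕ V_k, and let C, N : V → V be linear maps such that C(V_l) ⊆ V_l for all l, N(V_l) ⊆ V_{l−1} for all l ≥ 1, and N(V_0) = 0. Let α ∈ K be such that (C − α·id) restricts to a bijection of V_l for every l < k. Then for every S ∈ V_k with C(S) = α·S, there exists a unique Ŝ ∈ V such that (C + N)(Ŝ) = α·Ŝ and the V_k-component of Ŝ equals S. (This is the linear-algebraic mechanism (eigenvector lifting, equation (5.2) of the paper) by which the equivariant quantization associates an eigenvector of the Casimir operator 𝒞 = C + N to each homogeneous eigenvector of C.) -/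
/-!
On `W_n = V_0 ⊕ ⋯ ⊕ V_{n-1}` the operator `C - α + N` is block triangular with diagonal blocks
`C - α`, which are invertible for `n ≤ k`, so it is bijective on `W_k`. Since `(C - α + N) S = N S`
lies in `W_k`, the lift is `Ŝ = S - x` for the unique `x ∈ W_k` with `(C - α + N) x = N S`.
-/

namespace Submodule

variable {R M : Type*} [Ring R] [AddCommGroup M] [Module R M]

theorem bijOn_sup_of_triangular {A B : Submodule R M} {p q : M →ₗ[R] M}
    (hAB : Disjoint A B) (hp : Set.BijOn p A A) (hq : Set.MapsTo q A B)
    (hpq : Set.BijOn (p + q) B B) :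
    Set.BijOn (p + q) (B ⊔ A : Submodule R M) (B ⊔ A : Submodule R M) := by
  have hsplit : ∀ b a, (p + q) (b + a) = (p + q) b + p a + q a := fun b a => by
    simp only [map_add, LinearMap.add_apply]; abel
  refine ⟨?maps, LinearMap.disjoint_ker_iff_injOn.mp (LinearMap.disjoint_ker.mpr ?inj), ?surj⟩
  case maps =>
    intro x hx
    obtain ⟨b, hb, a, ha, rfl⟩ := mem_sup.mp hx
    rw [hsplit]
    exact add_mem (add_mem (mem_sup_left (hpq.mapsTo hb)) (mem_sup_right (hp.mapsTo ha)))
      (mem_sup_left (hq ha))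
  case inj =>
    intro x hx hx0
    obtain ⟨b, hb, a, ha, rfl⟩ := mem_sup.mp hx
    have hpa : p a ∈ B := by
      have : p a = -((p + q) b + q a) := by
        rw [hsplit] at hx0; linear_combination (norm := abel) hx0
      rw [this]
      exact neg_mem (add_mem (hpq.mapsTo hb) (hq ha))
    have ha0 : a = 0 :=
      hp.injOn ha A.zero_mem (by simpa using disjoint_def.mp hAB _ (hp.mapsTo ha) hpa)
    subst ha0
    have hb0 : b = 0 := hpq.injOn hb B.zero_mem (by simpa using hx0)
    simp [hb0]
  case surj =>
    intro y hy
    obtain ⟨b, hb, a, ha, rfl⟩ := mem_sup.mp hy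
    obtain ⟨x, hx, rfl⟩ := hp.surjOn ha
    obtain ⟨z, hz, hzeq⟩ := hpq.surjOn (sub_mem hb (hq hx) : b - q x ∈ B)
    refine ⟨z + x, add_mem_sup hz hx, ?_⟩
    rw [hsplit, hzeq]; abel

theorem existsUnique_map_eq_zero_sub_mem {L : M →ₗ[R] M} {W : Submodule R M}
    (hL : Set.BijOn L W W) {S : M} (hS : L S ∈ W) : ∃! T, L T = 0 ∧ T - S ∈ W := by
  obtain ⟨x, hx, hLx⟩ := hL.surjOn hS
  refine ⟨S - x, ⟨by simp [hLx], by simpa using W.neg_mem hx⟩, ?_⟩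
  rintro T ⟨hT, hTS⟩
  have : S - T = x := hL.injOn (by simpa using W.neg_mem hTS) hx (by simp [hT, hLx])
  rw [← this, sub_sub_cancel]

end Submodule

section Graded

variable {R V : Type*} [Ring R] [AddCommGroup V] [Module R V] (Vl : ℕ → Submodule R V)

theorem disjoint_iSup_lt (hind : iSupIndep Vl) (n : ℕ) : Disjoint (Vl n) (⨆ l < n, Vl l) := by
  simpa using hind.disjoint_biSup (y := Set.Iio n) (lt_irrefl n)

theorem iSup_ne_eq_iSup_lt {k : ℕ} (htop : ∀ l, k < l → Vl l = ⊥) :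
    ⨆ (l : ℕ) (_ : l ≠ k), Vl l = ⨆ l < k, Vl l :=
  le_antisymm
    (iSup₂_le fun l hl => hl.lt_or_gt.elim (fun h => le_iSup₂_of_le l h le_rfl)
      (fun h => (htop l h).trans_le bot_le))
    (biSup_mono fun _ => Nat.ne_of_lt)

variable {Vl} {q : V →ₗ[R] V}

theorem mapsTo_iSup_lt_of_degree_lowering (hq : ∀ l, 1 ≤ l → ∀ x ∈ Vl l, q x ∈ Vl (l - 1))
    (hq0 : ∀ x ∈ Vl 0, q x = 0) (n : ℕ) : Set.MapsTo q (Vl n) (⨆ l < n, Vl l : Submodule R V) := by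
  intro x hx
  rcases n with _ | n
  · simp [hq0 x hx]
  · exact le_iSup₂ (f := fun l (_ : l < n + 1) => Vl l) n n.lt_succ_self
      (hq (n + 1) n.succ_pos x hx)

theorem bijOn_add_iSup_lt (hq : ∀ l, 1 ≤ l → ∀ x ∈ Vl l, q x ∈ Vl (l - 1))
    (hq0 : ∀ x ∈ Vl 0, q x = 0) (hind : iSupIndep Vl) {p : V →ₗ[R] V} {k : ℕ}
    (hp : ∀ l < k, Set.BijOn p (Vl l) (Vl l)) :
    ∀ n ≤ k, Set.BijOn (p + q) (⨆ l < n, Vl l : Submodule R V) (⨆ l < n, Vl l : Submodule R V) := by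
  intro n
  induction n with
  | zero => intro; simp
  | succ n ih =>
    intro hn
    rw [Nat.iSup_lt_succ]
    exact Submodule.bijOn_sup_of_triangular (disjoint_iSup_lt Vl hind n) (hp n hn)
      (mapsTo_iSup_lt_of_degree_lowering hq hq0 n) (ih (Nat.le_of_succ_le hn))

end Graded

theorem eigenvector_lifting_general {K V : Type*} [Field K] [AddCommGroup V] [Module K V]
    (k : ℕ) (Vl : ℕ → Submodule K V)
    (hdirect : DirectSum.IsInternal Vl)
    (htop : ∀ l, k < l → Vl l = ⊥)
    (C N : V →ₗ[K] V)
    (hN : ∀ l, 1 ≤ l → ∀ x ∈ Vl l, N x ∈ Vl (l - 1))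
    (hN0 : ∀ x ∈ Vl 0, N x = 0)
    (α : K)
    (hbij : ∀ l < k, Set.BijOn (fun x => C x - α • x) (Vl l : Set V) (Vl l : Set V)) :
    ∀ S ∈ Vl k, C S = α • S →
      ∃! T : V, (C T + N T = α • T) ∧ T - S ∈ ⨆ (l : ℕ) (_ : l ≠ k), Vl l := by
  intro S hS hCS
  set L := C - α • LinearMap.id + N
  have hL : Set.BijOn L (⨆ l < k, Vl l : Submodule K V) (⨆ l < k, Vl l : Submodule K V) :=
    bijOn_add_iSup_lt hN hN0 hdirect.submodule_iSupIndep hbij k le_rfl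
  have hLS : L S = N S := by simp [L, hCS]
  rw [iSup_ne_eq_iSup_lt Vl htop]
  convert Submodule.existsUnique_map_eq_zero_sub_mem hL
    (hLS ▸ mapsTo_iSup_lt_of_degree_lowering hN hN0 k hS) using 3 with T
  simp [L, sub_add_eq_add_sub, sub_eq_zero]

/-- Eigenvector lifting: for `V = V₀ ⊕ ⋯ ⊕ V_k`, `C` grading-preserving, `N`
degree-lowering, and `C - α·id` bijective on each `V_l` with `l < k`, every
eigenvector `S ∈ V_k` of `C` with eigenvalue `α` lifts to a unique eigenvector `Ŝ`
of `C + N` with eigenvalue `α` whose `V_k`-component is `S`. -/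
theorem eigenvector_lifting {K V : Type*} [Field K] [AddCommGroup V] [Module K V]
    (k : ℕ) (Vl : ℕ → Submodule K V)
    (hdirect : DirectSum.IsInternal Vl)
    (htop : ∀ l, k < l → Vl l = ⊥)
    (C N : V →ₗ[K] V)
    (hC : ∀ l, ∀ x ∈ Vl l, C x ∈ Vl l)
    (hN : ∀ l, 1 ≤ l → ∀ x ∈ Vl l, N x ∈ Vl (l - 1))
    (hN0 : ∀ x ∈ Vl 0, N x = 0)
    (α : K)
    (hbij : ∀ l < k, Set.BijOn (fun x => C x - α • x) (Vl l : Set V) (Vl l : Set V)) :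
    ∀ S ∈ Vl k, C S = α • S →
      ∃! T : V, (C T + N T = α • T) ∧ T - S ∈ ⨆ (l : ℕ) (_ : l ≠ k), Vl l :=
  eigenvector_lifting_general k Vl hdirect htop C N hN hN0 α hbij
end

section
/- Let K be a field, let V be a K-vector space with an internal direct sum decomposition V = V_0 ⊕ V_1 ⊕ ⋯ ⊕ V_k, and let C, N : V → V be linear maps such that C(V_l) ⊆ V_l for all l, N(V_l) ⊆ V_{l−1} for all l ≥ 1, and N(V_0) = 0. Let α ∈ K be such that (C − α·id) restricts to a bijection of V_l for every l < k. Then for every S ∈ V_k with (C − α·id)²(S) = 0, there exists a unique Ŝ ∈ V such that ((C + N) − α·id)²(Ŝ) = 0 and the V_k-component of Ŝ equals S. (This is the generalized-eigenvector lifting, equation (5.1) of the paper, which is the core of the existence and uniqueness proof for the osp(p+1,q+1|2r)-equivariant quantization for non-resonant δ.) -/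
/-!
Write `D = C - α` and `A = (D + N)²`. Then `A = D² + Q` with `Q = DN + ND + N²` strictly lowering
the degree, while `D²` preserves each `V_l` and is bijective on it for `l < k`. So `A` is
block-triangular with invertible diagonal blocks on `V_0 ⊕ ⋯ ⊕ V_{m-1}`, hence bijective there for
`m ≤ k` by induction on `m`. Since `D²S = 0`, `AS = QS` has degree `< k`, and the lifts of `S` are
exactly `S + u` with `u` of degree `< k` solving `Au = -QS`, which exist and are unique.
-/

open Set

namespace GradedLifting

variable {R V : Type*} [Ring R] [AddCommGroup V] [Module R V]

def sumBelow (Vl : ℕ → Submodule R V) (m : ℕ) : Submodule R V := ⨆ l < m, Vl l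

variable {Vl : ℕ → Submodule R V}

theorem sumBelow_zero : sumBelow Vl 0 = ⊥ := by
  simp [sumBelow]

theorem sumBelow_succ (m : ℕ) : sumBelow Vl (m + 1) = Vl m ⊔ sumBelow Vl m := by
  rw [sumBelow, Nat.iSup_lt_succ, sup_comm, sumBelow]

theorem le_sumBelow {l m : ℕ} (h : l < m) : Vl l ≤ sumBelow Vl m :=
  le_iSup₂ (f := fun j (_ : j < m) => Vl j) l h

theorem sumBelow_mono : Monotone (sumBelow Vl) :=
  fun _ _ hmn => iSup₂_le fun _ hl => le_sumBelow (hl.trans_le hmn)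

theorem disjoint_sumBelow (hVl : iSupIndep Vl) (m : ℕ) : Disjoint (Vl m) (sumBelow Vl m) :=
  hVl.disjoint_biSup (y := {l | l < m}) (by simp)

theorem iSup_ne_eq_sumBelow {k : ℕ} (htop : ∀ l, k < l → Vl l = ⊥) :
    ⨆ (l : ℕ) (_ : l ≠ k), Vl l = sumBelow Vl k := by
  refine le_antisymm (iSup₂_le fun l hl => ?_) (iSup₂_le fun l hl => le_biSup Vl hl.ne)
  rcases hl.lt_or_gt with h | h
  · exact le_sumBelow h
  · simp [htop l h]

theorem mapsTo_sumBelow {f : V →ₗ[R] V} {W : Submodule R V} {m : ℕ}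
    (h : ∀ l < m, MapsTo f (Vl l) W) : MapsTo f (sumBelow Vl m) W :=
  fun _ hx => (iSup₂_le fun l hl _ hy => h l hl hy : sumBelow Vl m ≤ W.comap f) hx

theorem mapsTo_sumBelow_self {f : V →ₗ[R] V} {m : ℕ}
    (h : ∀ l < m, MapsTo f (Vl l) (sumBelow Vl (l + 1))) :
    MapsTo f (sumBelow Vl m) (sumBelow Vl m) :=
  mapsTo_sumBelow fun l hl => (h l hl).mono_right (sumBelow_mono hl)

theorem bijOn_sup_of_disjoint {A P : V →ₗ[R] V} {X Y : Submodule R V} (hXY : Disjoint X Y)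
    (hP : BijOn P X X) (hAP : MapsTo (A - P) X Y) (hA : BijOn A Y Y) :
    BijOn A (X ⊔ Y : Submodule R V) (X ⊔ Y : Submodule R V) := by
  have hsplit : ∀ x y, A (x + y) = P x + ((A - P) x + A y) := fun x y => by
    simp only [map_add, LinearMap.sub_apply]; abel
  refine ⟨?_, ?_, ?_⟩
  · intro z hz
    obtain ⟨x, hx, y, hy, rfl⟩ := Submodule.mem_sup.mp hz
    rw [SetLike.mem_coe, hsplit]
    exact Submodule.add_mem_sup (hP.mapsTo hx) (Y.add_mem (hAP hx) (hA.mapsTo hy))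
  · refine (Set.injOn_iff_map_eq_zero A (X ⊔ Y)).mpr fun z hz hAz => ?_
    obtain ⟨x, hx, y, hy, rfl⟩ := Submodule.mem_sup.mp hz
    rw [hsplit, add_eq_zero_iff_eq_neg] at hAz
    have hPx : P x = 0 := (Submodule.disjoint_def.mp hXY) _ (hP.mapsTo hx)
      (hAz ▸ Y.neg_mem (Y.add_mem (hAP hx) (hA.mapsTo hy)))
    have hx0 : x = 0 := hP.injOn hx X.zero_mem (by rw [hPx, map_zero])
    subst hx0
    have hy0 : y = 0 := hA.injOn hy Y.zero_mem (by simpa [hPx] using hAz)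
    rw [hy0, add_zero]
  · intro c hc
    obtain ⟨cx, hcx, cy, hcy, rfl⟩ := Submodule.mem_sup.mp hc
    obtain ⟨x, hx, rfl⟩ := hP.surjOn hcx
    obtain ⟨y, hy, hAy⟩ := hA.surjOn (Y.sub_mem hcy (hAP hx))
    refine ⟨x + y, Submodule.add_mem_sup hx hy, ?_⟩
    rw [hsplit, hAy]; abel

theorem bijOn_add_sumBelow (hVl : iSupIndep Vl) {P Q : V →ₗ[R] V} {m : ℕ}
    (hP : ∀ l < m, BijOn P (Vl l) (Vl l)) (hQ : ∀ l < m, MapsTo Q (Vl l) (sumBelow Vl l)) :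
    BijOn (P + Q) (sumBelow Vl m) (sumBelow Vl m) := by
  induction m with
  | zero => simp [sumBelow_zero]
  | succ m ih =>
    rw [sumBelow_succ]
    exact bijOn_sup_of_disjoint (disjoint_sumBelow hVl m) (hP m m.lt_succ_self)
      (by simpa only [add_sub_cancel_left] using hQ m m.lt_succ_self)
      (ih (fun l hl => hP l (hl.trans m.lt_succ_self)) fun l hl => hQ l (hl.trans m.lt_succ_self))

theorem mapsTo_add_mul_self_sub_mul_self {D N : Module.End R V}
    (hD : ∀ l, MapsTo D (Vl l) (Vl l)) (hN : ∀ l, MapsTo N (Vl l) (sumBelow Vl l)) (l : ℕ) :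
    MapsTo ((D + N) * (D + N) - D * D) (Vl l) (sumBelow Vl l) := by
  have hDl : MapsTo D (sumBelow Vl l) (sumBelow Vl l) :=
    mapsTo_sumBelow_self fun j _ => (hD j).mono_right (le_sumBelow j.lt_succ_self)
  have hNl : MapsTo N (sumBelow Vl l) (sumBelow Vl l) :=
    mapsTo_sumBelow_self fun j _ => (hN j).mono_right (sumBelow_mono j.le_succ)
  have hexpand : (D + N) * (D + N) - D * D = D * N + N * D + N * N := by noncomm_ring
  intro x hx
  rw [hexpand]
  simp only [LinearMap.add_apply, Module.End.mul_apply, SetLike.mem_coe]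
  exact add_mem (add_mem (hDl (hN l hx)) (hN l (hD l hx))) (hNl (hN l hx))

theorem existsUnique_map_eq_zero_sub_mem {A : V →ₗ[R] V} {W : Submodule R V}
    (hA : BijOn A W W) {S : V} (hS : A S ∈ W) : ∃! T, A T = 0 ∧ T - S ∈ W := by
  obtain ⟨u, hu, hAu⟩ := hA.surjOn (W.neg_mem hS)
  refine ⟨S + u, ⟨by rw [map_add, hAu, add_neg_cancel], by rwa [add_sub_cancel_left]⟩, ?_⟩
  rintro T ⟨hAT, hTS⟩
  have : T - S = u := hA.injOn hTS hu (by rw [map_sub, hAT, zero_sub, hAu])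
  rw [← this, add_sub_cancel]

end GradedLifting

open GradedLifting in
/-- Generalized-eigenvector lifting: for `V = V₀ ⊕ ⋯ ⊕ V_k`, `C` grading-preserving,
`N` degree-lowering, and `C - α·id` bijective on each `V_l` with `l < k`, every
`S ∈ V_k` with `(C - α·id)²S = 0` lifts to a unique `Ŝ` with
`((C + N) - α·id)²Ŝ = 0` whose `V_k`-component is `S`. -/
theorem generalized_eigenvector_lifting {K V : Type*} [Field K] [AddCommGroup V] [Module K V]
    (k : ℕ) (Vl : ℕ → Submodule K V)
    (hdirect : DirectSum.IsInternal Vl)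
    (htop : ∀ l, k < l → Vl l = ⊥)
    (C N : V →ₗ[K] V)
    (hC : ∀ l, ∀ x ∈ Vl l, C x ∈ Vl l)
    (hN : ∀ l, 1 ≤ l → ∀ x ∈ Vl l, N x ∈ Vl (l - 1))
    (hN0 : ∀ x ∈ Vl 0, N x = 0)
    (α : K)
    (hbij : ∀ l < k, Set.BijOn (fun x => C x - α • x) (Vl l : Set V) (Vl l : Set V)) :
    ∀ S ∈ Vl k, C (C S - α • S) - α • (C S - α • S) = 0 →
      ∃! T : V,
        ((C + N) ((C + N) T - α • T) - α • ((C + N) T - α • T) = 0) ∧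
          T - S ∈ ⨆ (l : ℕ) (_ : l ≠ k), Vl l := by
  intro S hS hS2
  set D : Module.End K V := C - α • 1
  have hDapp : ∀ x, D x = C x - α • x := fun x => rfl
  have hDVl : ∀ l, MapsTo D (Vl l) (Vl l) := fun l x hx =>
    (Vl l).sub_mem (hC l x hx) ((Vl l).smul_mem α hx)
  have hNVl : ∀ l, MapsTo N (Vl l) (sumBelow Vl l) := by
    rintro (_ | l) x hx
    · simp [hN0 x hx]
    · exact le_sumBelow l.lt_succ_self (hN (l + 1) l.succ_pos x hx)
  have hQ := mapsTo_add_mul_self_sub_mul_self hDVl hNVl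
  have hA : BijOn ((D + N) * (D + N)) (sumBelow Vl k) (sumBelow Vl k) := by
    simpa only [add_sub_cancel] using bijOn_add_sumBelow hdirect.submodule_iSupIndep (P := D * D)
      (fun l hl => (hbij l hl).comp (hbij l hl)) fun l _ => hQ l
  have hAS : ((D + N) * (D + N)) S ∈ sumBelow Vl k := by
    have hDDS : (D * D) S = 0 := hS2
    simpa only [LinearMap.sub_apply, hDDS, sub_zero, SetLike.mem_coe] using hQ k hS
  have hAT : ∀ T, (C + N) ((C + N) T - α • T) - α • ((C + N) T - α • T) =
      ((D + N) * (D + N)) T := fun T => by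
    simp only [Module.End.mul_apply, LinearMap.add_apply, hDapp, map_add, map_sub, map_smul]
    module
  simpa only [hAT, iSup_ne_eq_sumBelow htop] using existsUnique_map_eq_zero_sub_mem hA hAS
end
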